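/- Let D be a real m×n matrix. Then the minimum of ‖Z‖_* over all real n×n matrices Z satisfying D = DZ equals rank(D), and it is attained uniquely at Z = SIM(D). -/

import Mathlib

open Matrix

/-- The nuclear norm of a real matrix: the sum of its singular values
(the square roots of the eigenvalues of `Aᵀ * A`). -/
noncomputable def nuclearNorm {m n : Type*} [Fintype m] [Fintype n] [DecidableEq n]
    (A : Matrix m n ℝ) : ℝ :=
  ∑ i, Real.sqrt ((show (Aᵀ * A).IsHermitian by
    simpa [Matrix.conjTranspose_eq_transpose_of_trivial] using
      Matrix.isHermitian_conjTranspose_mul_self A).eigenvalues i)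

/-- The shape interaction matrix of a real `m × n` matrix `X`: the `n × n`
orthogonal projection matrix onto the row space of `X`. -/
noncomputable def SIM {m n : ℕ} (X : Matrix (Fin m) (Fin n) ℝ) :
    Matrix (Fin n) (Fin n) ℝ :=
  let U : Submodule ℝ (EuclideanSpace ℝ (Fin n)) :=
    Submodule.span ℝ (Set.range fun i => (WithLp.toLp 2 (X i) : EuclideanSpace ℝ (Fin n)))
  LinearMap.toMatrix'
    ((WithLp.linearEquiv 2 ℝ (Fin n → ℝ)).toLinearMap ∘ₗ
      ((U.subtypeL.comp U.orthogonalProjectionOnto).toLinearMap :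
        EuclideanSpace ℝ (Fin n) →ₗ[ℝ] EuclideanSpace ℝ (Fin n)) ∘ₗ
      (WithLp.linearEquiv 2 ℝ (Fin n → ℝ)).symm.toLinearMap :
      (Fin n → ℝ) →ₗ[ℝ] (Fin n → ℝ))

/-!
Let `P` be the orthogonal projection onto the row space `R` of `D`. The constraint `D = D Z`
says that `Zᵀ` fixes `R` pointwise: `⟪u, Z v⟫ = ⟪u, v⟫` for `u ∈ R`. Evaluate
`rank D = tr P` in an orthonormal eigenbasis `(vᵢ)` of `ZᵀZ`: it becomes `∑ ⟪P vᵢ, Z vᵢ⟫`,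
while `‖Z‖_* = ∑ ‖Z vᵢ‖`. Termwise `⟪P v, Z v⟫ ≤ ‖Z v‖` for a unit vector `v`: with
`b = ‖P v‖ ≤ 1` the constraint gives `⟪P v, Z v⟫ = b²`, and Cauchy–Schwarz gives
`b² ≤ b ‖Z v‖`. If all these inequalities are equalities, then `‖Z v - P v‖² = b⁴ - b² ≤ 0`,
so `Z` and `P` agree on a basis.
-/

open scoped RealInnerProductSpace

namespace Submodule

variable {E : Type*} [NormedAddCommGroup E] [InnerProductSpace ℝ E]

lemma trace_starProjection [FiniteDimensional ℝ E] (K : Submodule ℝ E) :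
    LinearMap.trace ℝ E K.starProjection = Module.finrank ℝ K :=
  LinearMap.IsProj.trace
    ⟨K.starProjection_apply_mem, fun _ hx => K.starProjection_eq_self_iff.mpr hx⟩

variable (K : Submodule ℝ E) [K.HasOrthogonalProjection]

lemma inner_starProjection_self (v : E) :
    ⟪K.starProjection v, v⟫ = ‖K.starProjection v‖ ^ 2 := by
  rw [← real_inner_self_eq_norm_sq, K.inner_starProjection_left_eq_right,
    K.inner_starProjection_left_eq_right,
    K.starProjection_eq_self_iff.mpr (K.starProjection_apply_mem v)]

variable {v w : E}

lemma inner_starProjection_le_norm (hv : ‖v‖ ≤ 1)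
    (hw : ⟪K.starProjection v, w⟫ = ⟪K.starProjection v, v⟫) :
    ⟪K.starProjection v, w⟫ ≤ ‖w‖ := by
  have hb : ‖K.starProjection v‖ ≤ 1 := (K.norm_starProjection_apply_le v).trans hv
  have hcs := real_inner_le_norm (K.starProjection v) w
  rw [hw, inner_starProjection_self] at hcs ⊢
  nlinarith [mul_le_mul_of_nonneg_right hb (norm_nonneg w)]

lemma eq_starProjection_of_inner_eq_norm (hv : ‖v‖ ≤ 1)
    (hw : ⟪K.starProjection v, w⟫ = ⟪K.starProjection v, v⟫)
    (h : ⟪K.starProjection v, w⟫ = ‖w‖) : w = K.starProjection v := by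
  have hb : ‖K.starProjection v‖ ≤ 1 := (K.norm_starProjection_apply_le v).trans hv
  have hsq := norm_sub_sq_real w (K.starProjection v)
  rw [real_inner_comm, h] at hsq
  rw [hw, inner_starProjection_self] at h
  have hsq_nonpos : ‖w - K.starProjection v‖ ^ 2 ≤ 0 := by
    rw [hsq, ← h]
    nlinarith [mul_nonneg (sq_nonneg ‖K.starProjection v‖)
      (sub_nonneg.2 (pow_le_one₀ (n := 2) (norm_nonneg _) hb))]
  exact sub_eq_zero.mp <| norm_eq_zero.mp <|
    (pow_eq_zero_iff two_ne_zero).mp (hsq_nonpos.antisymm (sq_nonneg _))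

end Submodule

section FixedByAdjoint

variable {E ι : Type*} [NormedAddCommGroup E] [InnerProductSpace ℝ E] [FiniteDimensional ℝ E]
  [Fintype ι] {K : Submodule ℝ E} {T : E →ₗ[ℝ] E}

lemma finrank_eq_sum_inner_starProjection_apply (hT : ∀ u ∈ K, ∀ v, ⟪u, T v⟫ = ⟪u, v⟫)
    (b : OrthonormalBasis ι ℝ E) :
    (Module.finrank ℝ K : ℝ) = ∑ i, ⟪K.starProjection (b i), T (b i)⟫ := by
  rw [← K.trace_starProjection, LinearMap.trace_eq_sum_inner _ b]
  refine Finset.sum_congr rfl fun i _ => ?_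
  rw [ContinuousLinearMap.coe_coe, ← K.inner_starProjection_left_eq_right,
    hT _ (K.starProjection_apply_mem _)]

lemma finrank_le_sum_norm_apply (hT : ∀ u ∈ K, ∀ v, ⟪u, T v⟫ = ⟪u, v⟫)
    (b : OrthonormalBasis ι ℝ E) : (Module.finrank ℝ K : ℝ) ≤ ∑ i, ‖T (b i)‖ := by
  rw [finrank_eq_sum_inner_starProjection_apply hT b]
  gcongr with i
  exact K.inner_starProjection_le_norm (b.norm_eq_one i).le (hT _ (K.starProjection_apply_mem _) _)

lemma eq_starProjection_of_sum_norm_apply_eq (hT : ∀ u ∈ K, ∀ v, ⟪u, T v⟫ = ⟪u, v⟫)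
    (b : OrthonormalBasis ι ℝ E) (h : ∑ i, ‖T (b i)‖ = Module.finrank ℝ K) :
    T = K.starProjection := by
  have hw : ∀ i, ⟪K.starProjection (b i), T (b i)⟫ = ⟪K.starProjection (b i), b i⟫ :=
    fun i => hT _ (K.starProjection_apply_mem _) _
  have hle : ∀ i ∈ Finset.univ, ⟪K.starProjection (b i), T (b i)⟫ ≤ ‖T (b i)‖ :=
    fun i _ => K.inner_starProjection_le_norm (b.norm_eq_one i).le (hw i)
  have hsum := (finrank_eq_sum_inner_starProjection_apply hT b).symm.trans h.symm
  refine b.toBasis.ext fun i => ?_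
  rw [b.coe_toBasis]
  exact K.eq_starProjection_of_inner_eq_norm (b.norm_eq_one i).le (hw i)
    ((Finset.sum_eq_sum_iff_of_le hle).mp hsum i (Finset.mem_univ i))

end FixedByAdjoint

namespace Matrix

variable {m n : Type*} [Fintype n]

noncomputable def rowSpace (D : Matrix m n ℝ) : Submodule ℝ (EuclideanSpace ℝ n) :=
  Submodule.span ℝ (Set.range fun i => WithLp.toLp 2 (D i))

lemma finrank_rowSpace [Finite m] (D : Matrix m n ℝ) :
    Module.finrank ℝ D.rowSpace = D.rank := by
  have : D.rowSpace = (Submodule.span ℝ (Set.range D.row)).map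
      (WithLp.linearEquiv 2 ℝ (n → ℝ)).symm.toLinearMap := by
    rw [Submodule.map_span, ← Set.range_comp]
    rfl
  rw [this, LinearEquiv.finrank_map_eq, rank_eq_finrank_span_row]

variable [DecidableEq n]

lemma inner_row_toEuclideanCLM (D : Matrix m n ℝ) (Z : Matrix n n ℝ) (i : m)
    (v : EuclideanSpace ℝ n) :
    ⟪WithLp.toLp 2 (D i), toEuclideanCLM (𝕜 := ℝ) Z v⟫ = ⟪WithLp.toLp 2 ((D * Z) i), v⟫ := by
  rw [inner_toEuclideanCLM, dotProduct_mulVec, EuclideanSpace.inner_eq_star_dotProduct,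
    star_trivial, dotProduct_comm, mul_apply_eq_vecMul]

lemma eq_mul_iff_forall_inner (D : Matrix m n ℝ) (Z : Matrix n n ℝ) :
    D = D * Z ↔ ∀ u ∈ D.rowSpace, ∀ v, ⟪u, toEuclideanCLM (𝕜 := ℝ) Z v⟫ = ⟪u, v⟫ := by
  constructor
  · intro hZ u hu v
    induction hu using Submodule.span_induction with
    | mem x hx =>
      obtain ⟨i, rfl⟩ := hx
      rw [inner_row_toEuclideanCLM, ← hZ]
    | zero => simp only [inner_zero_left]
    | add x y _ _ hx hy => rw [inner_add_left, inner_add_left, hx, hy]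
    | smul a x _ hx => rw [real_inner_smul_left, real_inner_smul_left, hx]
  · intro hZ
    funext i
    refine WithLp.toLp_injective 2 (ext_inner_right ℝ (E := EuclideanSpace ℝ n) fun v => ?_)
    rw [← inner_row_toEuclideanCLM, hZ _ (Submodule.subset_span ⟨i, rfl⟩)]

end Matrix

section NuclearNorm

variable {n : Type*} [Fintype n]

lemma Matrix.isHermitian_transpose_mul_self (Z : Matrix n n ℝ) : (Zᵀ * Z).IsHermitian :=
  isHermitian_iff_isSymm.mpr (isSymm_transpose_mul_self Z)

variable [DecidableEq n]

lemma norm_toEuclideanCLM_eigenvectorBasis (Z : Matrix n n ℝ) (hZ : (Zᵀ * Z).IsHermitian)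
    (i : n) : ‖toEuclideanCLM (𝕜 := ℝ) Z (hZ.eigenvectorBasis i)‖ = √(hZ.eigenvalues i) := by
  set v := hZ.eigenvectorBasis i
  have hsq : ‖toEuclideanCLM (𝕜 := ℝ) Z v‖ ^ 2 = hZ.eigenvalues i := by
    have hstar : Zᵀ * Z = star Z * Z := by
      rw [star_eq_conjTranspose, conjTranspose_eq_transpose_of_trivial]
    have heig : toEuclideanCLM (𝕜 := ℝ) (star Z * Z) v = hZ.eigenvalues i • v := by
      rw [← hstar]
      exact WithLp.ofLp_injective 2 (hZ.mulVec_eigenvectorBasis i)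
    rw [map_mul, map_star] at heig
    rw [← real_inner_self_eq_norm_sq, ← ContinuousLinearMap.adjoint_inner_right,
      ← ContinuousLinearMap.star_eq_adjoint, ← mul_apply_eq_comp, heig,
      real_inner_smul_right, real_inner_self_eq_norm_sq, hZ.eigenvectorBasis.norm_eq_one i,
      one_pow, mul_one]
  rw [← hsq, Real.sqrt_sq (norm_nonneg _)]

lemma nuclearNorm_eq_sum_norm_toEuclideanCLM (Z : Matrix n n ℝ) (hZ : (Zᵀ * Z).IsHermitian) :
    nuclearNorm Z = ∑ i, ‖toEuclideanCLM (𝕜 := ℝ) Z (hZ.eigenvectorBasis i)‖ := by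
  simp only [norm_toEuclideanCLM_eigenvectorBasis]
  rfl

variable {K : Submodule ℝ (EuclideanSpace ℝ n)}

lemma finrank_le_nuclearNorm {Z : Matrix n n ℝ}
    (hZ : ∀ u ∈ K, ∀ v, ⟪u, toEuclideanCLM (𝕜 := ℝ) Z v⟫ = ⟪u, v⟫) :
    (Module.finrank ℝ K : ℝ) ≤ nuclearNorm Z := by
  have hH := isHermitian_transpose_mul_self Z
  rw [nuclearNorm_eq_sum_norm_toEuclideanCLM Z hH]
  exact finrank_le_sum_norm_apply (T := (toEuclideanCLM (𝕜 := ℝ) Z).toLinearMap) hZ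
    hH.eigenvectorBasis

lemma toEuclideanCLM_eq_starProjection_of_nuclearNorm_eq {Z : Matrix n n ℝ}
    (hZ : ∀ u ∈ K, ∀ v, ⟪u, toEuclideanCLM (𝕜 := ℝ) Z v⟫ = ⟪u, v⟫)
    (h : nuclearNorm Z = Module.finrank ℝ K) :
    toEuclideanCLM (𝕜 := ℝ) Z = K.starProjection := by
  have hH := isHermitian_transpose_mul_self Z
  rw [nuclearNorm_eq_sum_norm_toEuclideanCLM Z hH] at h
  exact ContinuousLinearMap.coe_injective
    (eq_starProjection_of_sum_norm_apply_eq (T := (toEuclideanCLM (𝕜 := ℝ) Z).toLinearMap) hZ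
      hH.eigenvectorBasis h)

lemma nuclearNorm_eq_finrank_of_toEuclideanCLM_eq_starProjection {P : Matrix n n ℝ}
    (hP : toEuclideanCLM (𝕜 := ℝ) P = K.starProjection) :
    nuclearNorm P = Module.finrank ℝ K := by
  have hPP : Pᵀ * P = P := EquivLike.injective (toEuclideanCLM (𝕜 := ℝ) (n := n)) <| by
    rw [← conjTranspose_eq_transpose_of_trivial, ← star_eq_conjTranspose, map_mul, map_star, hP,
      (isStarProjection_starProjection (U := K)).isSelfAdjoint.star_eq,
      K.isIdempotentElem_starProjection.eq]
  have hH := isHermitian_transpose_mul_self P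
  rw [nuclearNorm_eq_sum_norm_toEuclideanCLM P hH, ← K.trace_starProjection,
    LinearMap.trace_eq_sum_inner _ hH.eigenvectorBasis]
  refine Finset.sum_congr rfl fun i _ => ?_
  set v := hH.eigenvectorBasis i
  have heig : toEuclideanCLM (𝕜 := ℝ) P v = hH.eigenvalues i • v := by
    conv_lhs => rw [← hPP]
    exact WithLp.ofLp_injective 2 (hH.mulVec_eigenvectorBasis i)
  have hinner : ⟪v, K.starProjection v⟫ = hH.eigenvalues i := by
    rw [← hP, heig, real_inner_smul_right, real_inner_self_eq_norm_sq,
      hH.eigenvectorBasis.norm_eq_one i, one_pow, mul_one]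
  have hnonneg : 0 ≤ hH.eigenvalues i := by
    rw [← hinner, real_inner_comm, K.inner_starProjection_self]
    positivity
  rw [ContinuousLinearMap.coe_coe, hinner, heig, norm_smul, hH.eigenvectorBasis.norm_eq_one i,
    mul_one, Real.norm_of_nonneg hnonneg]

end NuclearNorm

lemma toEuclideanCLM_SIM {m n : ℕ} (D : Matrix (Fin m) (Fin n) ℝ) :
    toEuclideanCLM (𝕜 := ℝ) (SIM D) = D.rowSpace.starProjection := by
  ext1 x
  apply WithLp.ofLp_injective 2
  rw [ofLp_toEuclideanCLM, ← toLin'_apply, SIM, toLin'_toMatrix']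
  rfl

/-- For a real `m × n` matrix `D`, the minimum of the nuclear norm over all `n × n`
matrices `Z` with `D = D * Z` equals `rank D`, and it is attained uniquely at
`Z = SIM D`. -/
theorem nuclearNorm_min_eq_rank_attained_at_sim {m n : ℕ}
    (D : Matrix (Fin m) (Fin n) ℝ) :
    D = D * SIM D ∧
    nuclearNorm (SIM D) = (D.rank : ℝ) ∧
    (∀ Z : Matrix (Fin n) (Fin n) ℝ, D = D * Z → (D.rank : ℝ) ≤ nuclearNorm Z) ∧
    (∀ Z : Matrix (Fin n) (Fin n) ℝ, D = D * Z → nuclearNorm Z = (D.rank : ℝ) →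
      Z = SIM D) := by
  have hSIM := toEuclideanCLM_SIM D
  have hSIM_fix : ∀ u ∈ D.rowSpace, ∀ v, ⟪u, toEuclideanCLM (𝕜 := ℝ) (SIM D) v⟫ = ⟪u, v⟫ := by
    intro u hu v
    rw [hSIM, ← Submodule.inner_starProjection_left_eq_right,
      Submodule.starProjection_eq_self_iff.mpr hu]
  rw [← D.finrank_rowSpace]
  refine ⟨(D.eq_mul_iff_forall_inner _).2 hSIM_fix,
    nuclearNorm_eq_finrank_of_toEuclideanCLM_eq_starProjection hSIM,
    fun Z hZ => finrank_le_nuclearNorm ((D.eq_mul_iff_forall_inner Z).1 hZ),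
    fun Z hZ h => EquivLike.injective (toEuclideanCLM (𝕜 := ℝ) (n := Fin n)) ?_⟩
  rw [hSIM]
  exact toEuclideanCLM_eq_starProjection_of_nuclearNorm_eq ((D.eq_mul_iff_forall_inner Z).1 hZ) h
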